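/- Decomposition theorem: every property P equals the intersection of a safety property and a liveness property; concretely, P = cls(P) ∩ (P ∪ cls(P)ᶜ), where cls(P) is safe and P ∪ cls(P)ᶜ is live. -/

import Mathlib

/-!
`cls pre` is a closure operator: it is extensive and idempotent. Hence `cls P` is safe, and
`P = cls P ∩ (P ∪ (cls P)ᶜ)` is plain set algebra. The set `P ∪ (cls P)ᶜ` is live because every
finite prefix `t` extends to some total `T'`: either `T' ∉ cls P`, or `t` is also a prefix of an
element of `P`.
-/

def cls {f ω : Type*} (pre : f → ω → Prop) (P : Set ω) : Set ω :=
  {T | ∀ t, pre t T → ∃ T' ∈ P, pre t T'}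

section Closure

variable {f ω : Type*} (pre : f → ω → Prop)

theorem subset_cls (P : Set ω) : P ⊆ cls pre P :=
  fun T hT _ ht => ⟨T, hT, ht⟩

theorem cls_cls (P : Set ω) : cls pre (cls pre P) = cls pre P := by
  refine Set.Subset.antisymm (fun T hT t ht => ?_) (subset_cls pre _)
  obtain ⟨T', hT', ht'⟩ := hT t ht
  exact hT' t ht'

theorem eq_cls_inter_union_compl_cls (P : Set ω) : P = cls pre P ∩ (P ∪ (cls pre P)ᶜ) := by
  rw [Set.inter_union_distrib_left, Set.inter_compl_self, Set.union_empty,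
    Set.inter_eq_right.mpr (subset_cls pre P)]

theorem cls_union_compl_cls_eq_univ (hext : ∀ t : f, ∃ T : ω, pre t T) (P : Set ω) :
    cls pre (P ∪ (cls pre P)ᶜ) = Set.univ := by
  refine Set.eq_univ_of_forall fun _ t _ => ?_
  obtain ⟨T', hT'⟩ := hext t
  by_cases hcls : T' ∈ cls pre P
  · obtain ⟨T'', hT'', ht''⟩ := hcls t hT'
    exact ⟨T'', Or.inl hT'', ht''⟩
  · exact ⟨T', Or.inr hcls, hT'⟩

end Closure

theorem decomposition_general {f ω : Type*} (pre : f → ω → Prop)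
    (hext : ∀ t : f, ∃ T : ω, pre t T)
    (P : Set ω) :
    P = cls pre P ∩ (P ∪ (cls pre P)ᶜ) ∧
    cls pre (cls pre P) = cls pre P ∧
    cls pre (P ∪ (cls pre P)ᶜ) = Set.univ :=
  ⟨eq_cls_inter_union_compl_cls pre P, cls_cls pre P, cls_union_compl_cls_eq_univ pre hext P⟩

theorem decomposition {f ω : Type*} (pre : f → ω → Prop) (le : f → f → Prop)
    (hfin : ∀ T : ω, ∃ t : f, pre t T)
    (hext : ∀ t : f, ∃ T : ω, pre t T)
    (hdown : ∀ t t' : f, ∀ T : ω, le t t' → pre t' T → pre t T)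
    (hdir : ∀ t₁ t₂ : f, ∀ T : ω, pre t₁ T → pre t₂ T →
      ∃ t₃, pre t₃ T ∧ le t₁ t₃ ∧ le t₂ t₃)
    (P : Set ω) :
    P = cls pre P ∩ (P ∪ (cls pre P)ᶜ) ∧
    cls pre (cls pre P) = cls pre P ∧
    cls pre (P ∪ (cls pre P)ᶜ) = Set.univ :=
  decomposition_general pre hext P
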